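/- Let P be a polyhedron in ℝⁿ, F a face of P, and G a nonempty face of F (so that G ⊆ F ⊆ P). Suppose q ∈ (F*)°|P and p ∈ (G*)°|F. Then there exists ε₀ > 0 such that for every ε with 0 < ε < ε₀, one has q + ε·p ∈ (G*)°|P. -/

import Mathlib

open scoped RealInnerProductSpace

noncomputable section

/-- A polyhedron in `ℝⁿ` is a finite intersection of closed half-spaces. -/
def IsPolyhedron {n : ℕ} (P : Set (EuclideanSpace ℝ (Fin n))) : Prop :=
  ∃ (N : ℕ) (q : Fin N → EuclideanSpace ℝ (Fin n)) (r : Fin N → ℝ),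
    P = {y | ∀ j, r j ≤ ⟪q j, y⟫}

/-- A subset `F ⊆ P` is a face of `P` if there are `q ∈ ℝⁿ` and `ρ ∈ ℝ` with
`⟨q, u⟩ = ρ` for every `u ∈ F` and `ρ < ⟨q, y⟩` for every `y ∈ P \ F`. -/
def IsFace {n : ℕ} (P F : Set (EuclideanSpace ℝ (Fin n))) : Prop :=
  F ⊆ P ∧ ∃ (q : EuclideanSpace ℝ (Fin n)) (ρ : ℝ),
    (∀ u ∈ F, ⟪q, u⟫ = ρ) ∧ ∀ y ∈ P \ F, ρ < ⟪q, y⟫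

/-- The interior `(F*)°|P` of the cone of `F` relative to the ambient set `P`. -/
def coneInterior {n : ℕ} (P F : Set (EuclideanSpace ℝ (Fin n))) :
    Set (EuclideanSpace ℝ (Fin n)) :=
  {q | q ≠ 0 ∧ ∃ ρ : ℝ, (∀ u ∈ F, ⟪q, u⟫ = ρ) ∧ ∀ y ∈ P \ F, ρ < ⟪q, y⟫}

/-!
Let `u ∈ G`. Homogenise `P` to a cone `K ⊆ ℝⁿ × ℝ`; it is cut out by finitely many linear
inequalities, so by Minkowski–Weyl it is spanned by finitely many vectors. On every generator
`⟪q, ·⟫ - ⟪q, u⟫ t` is nonnegative, and where it vanishes the generator lies in the homogenised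
face `F`, so `⟪p, ·⟫ - ⟪p, u⟫ t` is nonnegative there. Hence one `c ≥ 0` makes
`⟪p + c q, ·⟫ ≥ ⟪p + c q, u⟫` on the generators, so on `K` and on `P`. For `ε c < 1` the strict gap
of `q` off `F` then absorbs `ε` times the possible deficit of `p`, while on `F \ G` only `p`
moves, and strictly upwards.
-/

namespace PointedCone

variable {𝕜 E : Type*} [Field 𝕜] [LinearOrder 𝕜] [IsStrictOrderedRing 𝕜] [AddCommGroup E]
  [Module 𝕜 E]

lemma fg_top [FiniteDimensional 𝕜 E] : (⊤ : PointedCone 𝕜 E).FG := by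
  let b := Module.finBasis 𝕜 E
  refine Submodule.fg_def.2 ⟨Set.range b ∪ Set.range fun i => -b i, (Set.finite_range _).union
    (Set.finite_range _), eq_top_iff.2 fun x _ => ?_⟩
  rw [← b.sum_repr x]
  refine Submodule.sum_mem _ fun i _ => ?_
  rcases le_total 0 (b.repr x i) with h | h
  · exact (hull 𝕜 _).smul_mem h (subset_hull (Or.inl ⟨i, rfl⟩))
  · rw [← neg_neg (b.repr x i), neg_smul, ← smul_neg]
    exact (hull 𝕜 _).smul_mem (neg_nonneg.2 h) (subset_hull (Or.inr ⟨i, rfl⟩))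

lemma eq_zero_or_neg_of_mem_hull {f : Module.Dual 𝕜 E} {S : Set E} (hS : ∀ x ∈ S, f x < 0)
    {y : E} (hy : y ∈ hull 𝕜 S) : y = 0 ∨ f y < 0 := by
  induction hy using Submodule.span_induction with
  | mem x hx => exact Or.inr (hS x hx)
  | zero => exact Or.inl rfl
  | add x y _ _ hx hy =>
    rcases hx with rfl | hx <;> rcases hy with rfl | hy
    · simp
    all_goals simp_all [add_neg]
  | smul a x _ hx =>
    rcases eq_or_lt_of_le a.2 with ha | ha
    · left; simp [← Nonneg.coe_smul, ← ha]
    rcases hx with rfl | hx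
    · simp
    · right; simpa [← Nonneg.coe_smul] using mul_neg_of_pos_of_neg ha hx

lemma smul_sub_smul_mem_hull {f : Module.Dual 𝕜 E} {S T U : Set E}
    (h : ∀ u ∈ S, ∀ w ∈ T, f u • w - f w • u ∈ hull 𝕜 U) {x y : E} (hx : x ∈ hull 𝕜 S)
    (hy : y ∈ hull 𝕜 T) : f x • y - f y • x ∈ hull 𝕜 U := by
  induction hx, hy using Submodule.span_induction₂ with
  | mem_mem u w hu hw => exact h u hu w hw
  | zero_left y _ => simp
  | zero_right x _ => simp
  | add_left x₁ x₂ y _ _ _ h₁ h₂ => convert add_mem h₁ h₂ using 1; simp only [map_add]; module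
  | add_right x y₁ y₂ _ _ _ h₁ h₂ => convert add_mem h₁ h₂ using 1; simp only [map_add]; module
  | smul_left a x y _ _ h =>
    convert (hull 𝕜 U).smul_mem a.2 h using 1; simp only [← Nonneg.coe_smul, map_smul]; module
  | smul_right a x y _ _ h =>
    convert (hull 𝕜 U).smul_mem a.2 h using 1; simp only [← Nonneg.coe_smul, map_smul]; module

lemma FG.inf_dual_singleton {C : PointedCone 𝕜 E} (hC : C.FG) (f : Module.Dual 𝕜 E) :
    (C ⊓ dual .id {f}).FG := by
  obtain ⟨S, hS, rfl⟩ := Submodule.fg_def.1 hC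
  -- double description: keep the generators with `f ≥ 0` and combine each of them with each
  -- generator with `f < 0` into a vector of the hyperplane `f = 0`
  set Sp := {x ∈ S | 0 ≤ f x}
  set Sn := {x ∈ S | f x < 0}
  set B : E → E → E := fun x y => f x • y - f y • x
  set S' := Sp ∪ Set.image2 B Sp Sn
  refine Submodule.fg_def.2 ⟨S', (hS.sep _).union ((hS.sep _).image2 _ (hS.sep _)), ?_⟩
  apply le_antisymm
  · refine Submodule.span_le.2 ?_
    rintro _ (⟨hx, hfx⟩ | ⟨u, ⟨hu, hfu⟩, w, ⟨hw, hfw⟩, rfl⟩)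
    · exact ⟨subset_hull hx, by simpa using hfx⟩
    · refine ⟨?_, by simp [B, mul_comm]⟩
      show f u • w - f w • u ∈ hull 𝕜 S
      rw [sub_eq_add_neg, ← neg_smul]
      exact add_mem ((hull 𝕜 S).smul_mem hfu (subset_hull hw))
        ((hull 𝕜 S).smul_mem (neg_nonneg.2 hfw.le) (subset_hull hu))
  intro z hz
  obtain ⟨hz, hfz⟩ := Submodule.mem_inf.1 hz
  have hfz : 0 ≤ f z := by simpa using hfz
  have hSpn : S = Sp ∪ Sn := by ext x; by_cases h : 0 ≤ f x <;> simp [Sp, Sn, h, not_le.1]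
  rw [hSpn, Submodule.span_union, Submodule.mem_sup] at hz
  obtain ⟨x, hx, y, hy, rfl⟩ := hz
  have hSp' : hull 𝕜 Sp ≤ hull 𝕜 S' := Submodule.span_mono Set.subset_union_left
  have hSpf : hull 𝕜 Sp ≤ dual .id {f} := Submodule.span_le.2 fun u hu => by simpa using hu.2
  have hfx : 0 ≤ f x := by simpa using hSpf hx
  have hB : B x y ∈ hull 𝕜 S' := smul_sub_smul_mem_hull (f := f) (U := S')
    (fun u hu w hw => subset_hull (Or.inr ⟨u, hu, w, hw, rfl⟩)) hx hy
  rcases eq_or_lt_of_le hfx with hfx | hfx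
  · obtain rfl : y = 0 := (eq_zero_or_neg_of_mem_hull (fun _ h => h.2) hy).resolve_right
      (by simp only [map_add] at hfz; linarith)
    simpa using hSp' hx
  · have : x + y = (f x)⁻¹ • B x y + (f (x + y) / f x) • x := by
      simp only [B, map_add, smul_sub, smul_smul, inv_mul_cancel₀ hfx.ne', add_div,
        div_self hfx.ne']
      module
    rw [this]
    exact add_mem ((hull 𝕜 S').smul_mem (inv_nonneg.2 hfx.le) hB)
      ((hull 𝕜 S').smul_mem (div_nonneg hfz hfx.le) (hSp' hx))

theorem DualFG.fg [FiniteDimensional 𝕜 E] {C : PointedCone 𝕜 E} (hC : C.DualFG .id) :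
    C.FG := by
  classical
  obtain ⟨s, rfl⟩ := hC
  induction s using Finset.induction_on with
  | empty => simpa using fg_top
  | insert f s _ ih =>
    rw [Finset.coe_insert, dual_insert, inf_comm]
    exact FG.inf_dual_singleton ih f

lemma FG.exists_nonneg_add_mul_of_nonneg {C : PointedCone 𝕜 E} (hC : C.FG)
    {g h : Module.Dual 𝕜 E} (hg : ∀ z ∈ C, 0 ≤ g z) (hh : ∀ z ∈ C, g z = 0 → 0 ≤ h z) :
    ∃ c : 𝕜, 0 ≤ c ∧ ∀ z ∈ C, 0 ≤ h z + c * g z := by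
  obtain ⟨S, rfl⟩ := hC
  -- summands with `g v = 0` vanish, since `|h v| / 0 = 0`
  set c := ∑ v ∈ S, |h v| / g v
  have hterm : ∀ v ∈ S, 0 ≤ |h v| / g v := fun v hv =>
    div_nonneg (abs_nonneg _) (hg v (subset_hull hv))
  refine ⟨c, Finset.sum_nonneg hterm, fun z hz => ?_⟩
  suffices hle : hull 𝕜 (S : Set E) ≤ dual .id {h + c • g} by simpa using hle hz
  refine Submodule.span_le.2 fun v hv => ?_
  have hgv := hg v (subset_hull hv)
  simp only [SetLike.mem_coe, mem_dual, Set.mem_singleton_iff, forall_eq, LinearMap.id_apply,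
    LinearMap.add_apply, LinearMap.smul_apply, smul_eq_mul]
  rcases hgv.eq_or_lt with hgv | hgv
  · rw [← hgv, mul_zero, add_zero]; exact hh v (subset_hull hv) hgv.symm
  · have : |h v| / g v ≤ c := Finset.single_le_sum hterm hv
    have : |h v| ≤ c * g v := (div_le_iff₀ hgv).1 this
    linarith [neg_abs_le (h v)]

end PointedCone

section Homogenization

open PointedCone

variable {E : Type*} [NormedAddCommGroup E] [InnerProductSpace ℝ E]

/-- A constraint `(w, c)` stands for the half-space `c ≤ ⟪w, y⟫`. -/
def polyhedron (s : Set (E × ℝ)) : Set E := {y | ∀ a ∈ s, a.2 ≤ ⟪a.1, y⟫}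

def homogenize (a : E × ℝ) : Module.Dual ℝ (E × ℝ) :=
  innerₗ E a.1 ∘ₗ LinearMap.fst ℝ E ℝ - a.2 • LinearMap.snd ℝ E ℝ

/-- The points `(y, t)` with `t > 0` are the rays through `polyhedron s × {1}`; those with
`t = 0` are the recession directions of `polyhedron s`. -/
def homogenization (s : Set (E × ℝ)) : PointedCone ℝ (E × ℝ) :=
  dual .id (insert (LinearMap.snd ℝ E ℝ) (homogenize '' s))

@[simp]
lemma homogenize_apply (a : E × ℝ) (z : E × ℝ) : homogenize a z = ⟪a.1, z.1⟫ - a.2 * z.2 := by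
  simp [homogenize]

lemma mem_homogenization {s : Set (E × ℝ)} {z : E × ℝ} :
    z ∈ homogenization s ↔ 0 ≤ z.2 ∧ ∀ a ∈ s, a.2 * z.2 ≤ ⟪a.1, z.1⟫ := by
  simp only [homogenization, mem_dual, Set.forall_mem_insert, Set.forall_mem_image,
    LinearMap.id_apply, LinearMap.snd_apply, homogenize_apply, sub_nonneg]

lemma mk_one_mem_homogenization {s : Set (E × ℝ)} {y : E} (hy : y ∈ polyhedron s) :
    (y, 1) ∈ homogenization s :=
  mem_homogenization.2 ⟨zero_le_one, fun a ha => by simpa using hy a ha⟩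

lemma inv_smul_mem_polyhedron {s : Set (E × ℝ)} {z : E × ℝ} (hz : z ∈ homogenization s)
    (ht : 0 < z.2) : z.2⁻¹ • z.1 ∈ polyhedron s := fun a ha => by
  rw [real_inner_smul_right, le_inv_mul_iff₀ ht, mul_comm]
  exact (mem_homogenization.1 hz).2 a ha

lemma add_mem_polyhedron {s : Set (E × ℝ)} {z : E × ℝ} (hz : z ∈ homogenization s)
    (ht : z.2 = 0) {u : E} (hu : u ∈ polyhedron s) : u + z.1 ∈ polyhedron s := fun a ha => by
  have := (mem_homogenization.1 hz).2 a ha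
  rw [ht, mul_zero] at this
  rw [inner_add_right]
  linarith [hu a ha]

lemma homogenize_nonneg_of_isMinOn {s : Set (E × ℝ)} {w u : E} (hu : u ∈ polyhedron s)
    (hmin : IsMinOn (⟪w, ·⟫) (polyhedron s) u) {z : E × ℝ} (hz : z ∈ homogenization s) :
    0 ≤ homogenize (w, ⟪w, u⟫) z := by
  rw [homogenize_apply, sub_nonneg]
  rcases (mem_homogenization.1 hz).1.eq_or_lt with ht | ht
  · have := isMinOn_iff.1 hmin _ (add_mem_polyhedron hz ht.symm hu)
    rw [inner_add_right] at this
    rw [← ht, mul_zero]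
    linarith
  · have := isMinOn_iff.1 hmin _ (inv_smul_mem_polyhedron hz ht)
    rwa [real_inner_smul_right, le_inv_mul_iff₀ ht, mul_comm] at this

theorem exists_isMinOn_add_smul [FiniteDimensional ℝ E] {s : Set (E × ℝ)} (hs : s.Finite)
    {p q u : E} (hu : u ∈ polyhedron s) (hq : IsMinOn (⟪q, ·⟫) (polyhedron s) u)
    (hp : IsMinOn (⟪p, ·⟫) {y ∈ polyhedron s | ⟪q, y⟫ ≤ ⟪q, u⟫} u) :
    ∃ c : ℝ, 0 ≤ c ∧ IsMinOn (⟪p + c • q, ·⟫) (polyhedron s) u := by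
  have hK : (homogenization s).FG :=
    DualFG.fg (DualFG.dual_of_finite _ ((hs.image _).insert _))
  set s' := insert (-q, -⟪q, u⟫) s
  have hface : polyhedron s' = {y ∈ polyhedron s | ⟪q, y⟫ ≤ ⟪q, u⟫} := by
    ext y; simp [s', polyhedron, inner_neg_left, and_comm]
  have hu' : u ∈ polyhedron s' := hface ▸ ⟨hu, le_rfl⟩
  obtain ⟨c, hc, hbound⟩ := FG.exists_nonneg_add_mul_of_nonneg hK
    (fun z hz => homogenize_nonneg_of_isMinOn hu hq hz) fun z hz hgz => by
      refine homogenize_nonneg_of_isMinOn hu' (hface ▸ hp) (mem_homogenization.2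
        ⟨(mem_homogenization.1 hz).1, ?_⟩)
      simp only [homogenize_apply, sub_eq_zero] at hgz
      simpa [s', inner_neg_left, hgz] using (mem_homogenization.1 hz).2
  refine ⟨c, hc, isMinOn_iff.2 fun y hy => ?_⟩
  have := hbound _ (mk_one_mem_homogenization hy)
  simp only [homogenize_apply, mul_one] at this
  simp only [inner_add_left, real_inner_smul_left]
  linarith

end Homogenization

section ConeInterior

variable {n : ℕ} {P F G : Set (EuclideanSpace ℝ (Fin n))} {p q u v y : EuclideanSpace ℝ (Fin n)}

lemma IsPolyhedron.exists_finite (hP : IsPolyhedron P) :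
    ∃ s : Set (EuclideanSpace ℝ (Fin n) × ℝ), s.Finite ∧ P = polyhedron s := by
  obtain ⟨N, Q, R, rfl⟩ := hP
  exact ⟨Set.range fun j => (Q j, R j), Set.finite_range _, by ext; simp [polyhedron]⟩

lemma inner_eq_of_mem_coneInterior (hq : q ∈ coneInterior P F) (hu : u ∈ F) (hv : v ∈ F) :
    ⟪q, u⟫ = ⟪q, v⟫ := by
  obtain ⟨-, ρ, hF, -⟩ := hq
  rw [hF u hu, hF v hv]

lemma inner_lt_of_mem_coneInterior (hq : q ∈ coneInterior P F) (hu : u ∈ F) (hy : y ∈ P \ F) :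
    ⟪q, u⟫ < ⟪q, y⟫ := by
  obtain ⟨-, ρ, hF, hP⟩ := hq
  rw [hF u hu]
  exact hP y hy

lemma isMinOn_of_mem_coneInterior (hq : q ∈ coneInterior P F) (hu : u ∈ F) :
    IsMinOn (⟪q, ·⟫) P u := fun y hy => by
  by_cases hyF : y ∈ F
  · exact (inner_eq_of_mem_coneInterior hq hu hyF).le
  · exact (inner_lt_of_mem_coneInterior hq hu ⟨hy, hyF⟩).le

lemma mem_of_mem_coneInterior_of_inner_le (hq : q ∈ coneInterior P F) (hu : u ∈ F) (hy : y ∈ P)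
    (h : ⟪q, y⟫ ≤ ⟪q, u⟫) : y ∈ F := by
  by_contra hyF
  exact (inner_lt_of_mem_coneInterior hq hu ⟨hy, hyF⟩).not_ge h

lemma add_smul_mem_coneInterior (hGF : G ⊆ F) (hq : q ∈ coneInterior P F)
    (hp : p ∈ coneInterior F G) (hu : u ∈ G) {c : ℝ} (hc : IsMinOn (⟪p + c • q, ·⟫) P u)
    {ε : ℝ} (hε : 0 < ε) (hεc : ε * c < 1) (hεq : ε * ‖p‖ < ‖q‖) :
    q + ε • p ∈ coneInterior P G := by
  refine ⟨fun h => ?_, ⟪q + ε • p, u⟫, fun v hv => ?_, fun y ⟨hyP, hyG⟩ => ?_⟩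
  · rw [add_eq_zero_iff_eq_neg, ← neg_smul] at h
    rw [h, norm_smul, norm_neg, Real.norm_of_nonneg hε.le] at hεq
    exact hεq.false
  · simp only [inner_add_left, real_inner_smul_left]
    rw [inner_eq_of_mem_coneInterior hq (hGF hv) (hGF hu), inner_eq_of_mem_coneInterior hp hv hu]
  simp only [inner_add_left, real_inner_smul_left]
  by_cases hyF : y ∈ F
  · rw [inner_eq_of_mem_coneInterior hq (hGF hu) hyF]
    have := inner_lt_of_mem_coneInterior hp hu ⟨hyF, hyG⟩
    nlinarith
  · have hlt := inner_lt_of_mem_coneInterior hq (hGF hu) ⟨hyP, hyF⟩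
    have hmin := isMinOn_iff.1 hc y hyP
    simp only [inner_add_left, real_inner_smul_left] at hmin
    -- `hmin` says `⟪p, y - u⟫ ≥ -c ⟪q, y - u⟫`; scale by `ε` and use `ε c < 1`
    nlinarith

end ConeInterior

/-- Transitivity rule for cones: if `G ⪯ F ⪯ P`, `q ∈ (F*)°|P` and `p ∈ (G*)°|F`, then
`q + ε • p ∈ (G*)°|P` for all sufficiently small `ε > 0`. -/
theorem stmt14 {n : ℕ} (P F G : Set (EuclideanSpace ℝ (Fin n)))
    (hP : IsPolyhedron P) (hF : IsFace P F) (hG : IsFace F G) (hGne : G.Nonempty)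
    (q p : EuclideanSpace ℝ (Fin n))
    (hq : q ∈ coneInterior P F) (hp : p ∈ coneInterior F G) :
    ∃ ε₀ : ℝ, 0 < ε₀ ∧ ∀ ε : ℝ, 0 < ε → ε < ε₀ →
      q + ε • p ∈ coneInterior P G := by
  obtain ⟨u, hu⟩ := hGne
  have huF : u ∈ F := hG.1 hu
  obtain ⟨s, hs, rfl⟩ := hP.exists_finite
  obtain ⟨c, hc, hmin⟩ := exists_isMinOn_add_smul hs (hF.1 huF)
    (isMinOn_of_mem_coneInterior hq huF) fun y ⟨hyP, hy⟩ =>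
      isMinOn_of_mem_coneInterior hp hu (mem_of_mem_coneInterior_of_inner_le hq huF hyP hy)
  have hqpos : 0 < ‖q‖ := norm_pos_iff.2 hq.1
  refine ⟨min (1 / (c + 1)) (‖q‖ / (‖p‖ + 1)),
    lt_min (div_pos one_pos (by linarith)) (by positivity),
    fun ε hε hεlt => add_smul_mem_coneInterior hG.1 hq hp hu hmin hε ?_ ?_⟩
  · have := (lt_div_iff₀ (by linarith)).1 (hεlt.trans_le (min_le_left _ _))
    nlinarith
  · have := (lt_div_iff₀ (by positivity)).1 (hεlt.trans_le (min_le_right _ _))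
    nlinarith [norm_nonneg p]
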